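/- arXiv:2006.15083 — 4 statements merged into one kernel-verified Lean document; each statement's English description precedes it below -/
import Mathlib

section
/- Let α, c ∈ ℝ and λ ∈ ℂ. The following are equivalent: (i) there exist ν₁, ν₂ ∈ ℂ with Re ν₁ = Re ν₂ such that (1+iα)ν² - cν + 1 - λ = (1+iα)(ν - ν₁)(ν - ν₂) for all ν ∈ ℂ (i.e. the two roots of the dispersion relation, counted with multiplicity, have equal real parts); (ii) there exists s ≥ 0 such that λ = 1 - c²/(4(1+iα)) - (1+iα)s². -/
/-!
With `a = 1 + iα ≠ 0`, Vieta's formulas put the two roots at `c/(2a) ± d`, and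
`λ = 1 - a ν₁ ν₂ = 1 - c²/(4a) + a d²`. The roots have equal real parts exactly when `d`
is purely imaginary, i.e. `d² = -s²` with `s ≥ 0` real.
-/

theorem mul_sub_mul_sub_eq_quadratic_iff {R : Type*} [CommRing R] (a b k ν₁ ν₂ : R) :
    (∀ ν : R, a * ν ^ 2 - b * ν + k = a * (ν - ν₁) * (ν - ν₂)) ↔
      a * (ν₁ + ν₂) = b ∧ a * (ν₁ * ν₂) = k := by
  constructor
  · intro h
    have hk : a * (ν₁ * ν₂) = k := by linear_combination -h 0
    exact ⟨by linear_combination h 1 - h 0, hk⟩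
  · rintro ⟨rfl, rfl⟩ ν
    ring

theorem vieta_iff_exists_centered {K : Type*} [Field K] {a : K} (ha : a ≠ 0) (h2 : (2 : K) ≠ 0)
    (b k ν₁ ν₂ : K) :
    a * (ν₁ + ν₂) = b ∧ a * (ν₁ * ν₂) = k ↔
      ∃ d, ν₁ = b / (2 * a) + d ∧ ν₂ = b / (2 * a) - d ∧ k = b ^ 2 / (4 * a) - a * d ^ 2 := by
  have h4 : (4 : K) = 2 ^ 2 := by norm_num
  rw [h4]
  constructor
  · rintro ⟨rfl, rfl⟩
    refine ⟨(ν₁ - ν₂) / 2, ?_, ?_, ?_⟩ <;> field_simp <;> ring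
  · rintro ⟨d, rfl, rfl, rfl⟩
    constructor <;> field_simp <;> ring

theorem Complex.exists_sq_eq_neg_sq_of_re_eq_zero {d : ℂ} (h : d.re = 0) :
    ∃ s : ℝ, 0 ≤ s ∧ d ^ 2 = -(s : ℂ) ^ 2 := by
  refine ⟨|d.im|, abs_nonneg _, ?_⟩
  have hd : d = I * d.im := by apply Complex.ext <;> simp [h]
  have habs : ((|d.im| : ℝ) : ℂ) ^ 2 = (d.im : ℂ) ^ 2 := by norm_cast; exact sq_abs _
  conv_lhs => rw [hd]
  rw [habs, mul_pow, I_sq]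
  ring

/-- `λ` belongs to the absolute spectrum of `L₀ = (1+iα)∂² + c∂ + 1` (both spatial roots of
the dispersion relation have equal real parts) iff `λ = 1 - c²/(4(1+iα)) - (1+iα)s²` for
some `s ≥ 0`. -/
theorem stmt_3 (α c : ℝ) (lam : ℂ) :
    (∃ ν₁ ν₂ : ℂ, ν₁.re = ν₂.re ∧
      ∀ ν : ℂ, (1 + Complex.I * α) * ν ^ 2 - (c : ℂ) * ν + 1 - lam
        = (1 + Complex.I * α) * (ν - ν₁) * (ν - ν₂)) ↔
    (∃ s : ℝ, 0 ≤ s ∧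
      lam = 1 - (c : ℂ) ^ 2 / (4 * (1 + Complex.I * α)) - (1 + Complex.I * α) * (s : ℂ) ^ 2) := by
  set a := 1 + Complex.I * α
  have ha : a ≠ 0 := fun h => by simpa [a] using congrArg Complex.re h
  simp_rw [add_sub_assoc, mul_sub_mul_sub_eq_quadratic_iff,
    vieta_iff_exists_centered ha two_ne_zero]
  constructor
  · rintro ⟨_, _, hre, d, rfl, rfl, hk⟩
    have hd : d.re = 0 := by
      simp only [Complex.add_re, Complex.sub_re] at hre
      linarith
    obtain ⟨s, hs, hds⟩ := Complex.exists_sq_eq_neg_sq_of_re_eq_zero hd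
    exact ⟨s, hs, by linear_combination -hk + a * hds⟩
  · rintro ⟨s, -, rfl⟩
    refine ⟨_, _, ?_, Complex.I * s, rfl, rfl, ?_⟩
    · simp
    · linear_combination a * (s : ℂ) ^ 2 * Complex.I_sq
end

section
/- Let α ∈ ℝ, λ ∈ ℂ with λ ≠ 0, and let R : ℝ → ℝ be continuous with R(ξ) ≥ 0 for all ξ. Suppose ŵ, ŷ : ℝ → ℂ are twice continuously differentiable, not both identically zero, satisfy ŵ'' = λ(1-iα)ŵ + R·(2ŵ + ŷ) and ŷ'' = λ(1+iα)ŷ + R·(ŵ + 2ŷ) on ℝ, and suppose ŵ, ŷ, ŵ', ŷ', √R·ŵ, √R·ŷ are square integrable on ℝ and ŵ(ξ)·conj(ŵ'(ξ)) → 0 and ŷ(ξ)·conj(ŷ'(ξ)) → 0 as ξ → ±∞. Then Re λ < 0. -/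
/-!
Pairing the equation for `ŵ` with `conj ŵ` and that for `ŷ` with `conj ŷ`, integrating by parts
(the boundary fluxes vanish) and adding, the coupling terms combine to `R (|ŵ|² + |ŷ|² + |ŵ + ŷ|²)`:
`λ ((1 - iα)‖ŵ‖² + (1 + iα)‖ŷ‖²) = -(‖ŵ'‖² + ‖ŷ'‖² + ∫ R (|ŵ|² + |ŷ|² + |ŵ + ŷ|²))`.
The right side is a nonpositive real `-E` and the factor `z` of `λ` has real part
`‖ŵ‖² + ‖ŷ‖² > 0`, so `Re λ = -E Re z / |z|² ≤ 0`, with equality only if `E = 0`, i.e. `λ = 0`.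
-/

open MeasureTheory Filter Complex ComplexConjugate Topology

theorem integral_conj_mul_deriv_deriv {f : ℝ → ℂ} (hf : ContDiff ℝ 2 f)
    (hf' : Integrable fun x => ‖deriv f x‖ ^ 2)
    (hf'' : Integrable fun x => conj (f x) * deriv (deriv f) x)
    (htop : Tendsto (fun x => f x * conj (deriv f x)) atTop (𝓝 0))
    (hbot : Tendsto (fun x => f x * conj (deriv f x)) atBot (𝓝 0)) :
    ∫ x, conj (f x) * deriv (deriv f) x = -((∫ x, ‖deriv f x‖ ^ 2 : ℝ) : ℂ) := by
  have hdf : Differentiable ℝ f := hf.differentiable two_ne_zero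
  have hddf : Differentiable ℝ (deriv f) :=
    ((contDiff_succ_iff_deriv (n := 1)).mp hf).2.2.differentiable one_ne_zero
  have hf'C : Integrable fun x => ((‖deriv f x‖ ^ 2 : ℝ) : ℂ) := hf'.ofReal
  have hflux : ∀ x, HasDerivAt (fun x => conj (f x) * deriv f x)
      (((‖deriv f x‖ ^ 2 : ℝ) : ℂ) + conj (f x) * deriv (deriv f) x) x := fun x =>
    ((hdf x).hasDerivAt.star.mul (hddf x).hasDerivAt).congr_deriv (by
      rw [Complex.ofReal_pow, ← Complex.conj_mul']; rfl)
  have hconj_tendsto : ∀ l : Filter ℝ, Tendsto (fun x => f x * conj (deriv f x)) l (𝓝 0) →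
      Tendsto (fun x => conj (f x) * deriv f x) l (𝓝 0) := fun l h => by
    simpa [Function.comp_def] using (Complex.continuous_conj.tendsto 0).comp h
  have h := integral_of_hasDerivAt_of_tendsto hflux (hf'C.add hf'')
    (hconj_tendsto _ hbot) (hconj_tendsto _ htop)
  rw [integral_add hf'C hf'', integral_complex_ofReal, sub_zero] at h
  linear_combination h

theorem integral_conj_mul_deriv_deriv_of_eq {f h : ℝ → ℂ} {c : ℂ}
    (heq : ∀ x, deriv (deriv f) x = c * f x + h x) (hf : ContDiff ℝ 2 f)
    (hf2 : Integrable fun x => ‖f x‖ ^ 2) (hfh : Integrable fun x => conj (f x) * h x)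
    (hf' : Integrable fun x => ‖deriv f x‖ ^ 2)
    (htop : Tendsto (fun x => f x * conj (deriv f x)) atTop (𝓝 0))
    (hbot : Tendsto (fun x => f x * conj (deriv f x)) atBot (𝓝 0)) :
    c * ((∫ x, ‖f x‖ ^ 2 : ℝ) : ℂ) + ∫ x, conj (f x) * h x
      = -((∫ x, ‖deriv f x‖ ^ 2 : ℝ) : ℂ) := by
  have hf2C : Integrable fun x => ((‖f x‖ ^ 2 : ℝ) : ℂ) := hf2.ofReal
  have hpt : ∀ x, conj (f x) * deriv (deriv f) x
      = c * ((‖f x‖ ^ 2 : ℝ) : ℂ) + conj (f x) * h x := fun x => by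
    rw [heq, Complex.ofReal_pow, ← Complex.conj_mul']
    ring
  have hff'' : Integrable fun x => conj (f x) * deriv (deriv f) x :=
    ((hf2C.const_mul c).add hfh).congr (ae_of_all _ fun x => (hpt x).symm)
  rw [← integral_conj_mul_deriv_deriv hf hf' hff'' htop hbot, integral_congr_ae (ae_of_all _ hpt),
    integral_add (hf2C.const_mul c) hfh, integral_const_mul, integral_complex_ofReal]

theorem integrable_conj_mul_coupling {X : Type*} [MeasurableSpace X] {μ : Measure X}
    {R : X → ℝ} {f g : X → ℂ} (hR0 : ∀ x, 0 ≤ R x) (hR : AEStronglyMeasurable R μ)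
    (hf : AEStronglyMeasurable f μ) (hg : AEStronglyMeasurable g μ)
    (hRf : Integrable (fun x => R x * ‖f x‖ ^ 2) μ) (hRg : Integrable (fun x => R x * ‖g x‖ ^ 2) μ) :
    Integrable (fun x => conj (f x) * ((R x : ℂ) * (2 * f x + g x))) μ := by
  -- `‖f‖ ‖2f + g‖ ≤ 2‖f‖² + ‖f‖ ‖g‖ ≤ 3‖f‖² + ‖g‖²`
  refine ((hRf.const_mul 3).add hRg).mono' ?_ (Eventually.of_forall fun x => ?_)
  · exact hf.star.mul ((Complex.continuous_ofReal.comp_aestronglyMeasurable hR).mul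
      ((hf.const_mul 2).add hg))
  · have hsum : ‖2 * f x + g x‖ ≤ 2 * ‖f x‖ + ‖g x‖ := by
      simpa using norm_add_le (2 * f x) (g x)
    rw [norm_mul, norm_mul, Complex.norm_conj, Complex.norm_real, Real.norm_of_nonneg (hR0 x)]
    show _ ≤ 3 * (R x * ‖f x‖ ^ 2) + R x * ‖g x‖ ^ 2
    nlinarith [hR0 x, mul_le_mul_of_nonneg_left hsum (mul_nonneg (hR0 x) (norm_nonneg (f x))),
      mul_nonneg (hR0 x) (sq_nonneg (‖f x‖ - ‖g x‖))]

theorem conj_mul_coupling_add_conj_mul_coupling (r : ℝ) (a b : ℂ) :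
    conj a * (r * (2 * a + b)) + conj b * (r * (2 * b + a))
      = ((r * (‖a‖ ^ 2 + ‖b‖ ^ 2 + ‖a + b‖ ^ 2) : ℝ) : ℂ) := by
  push_cast
  rw [← Complex.conj_mul', ← Complex.conj_mul', ← Complex.conj_mul', map_add]
  ring

theorem re_neg_of_mul_eq_neg_ofReal {lam z : ℂ} {E : ℝ} (hlam : lam ≠ 0) (hz : 0 < z.re)
    (hE : 0 ≤ E) (h : lam * z = -E) : lam.re < 0 := by
  have hre : lam.re * z.re - lam.im * z.im = -E := by simpa using congrArg re h
  have him : lam.re * z.im + lam.im * z.re = 0 := by simpa using congrArg im h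
  have hnorm : lam.re * (z.re ^ 2 + z.im ^ 2) = -E * z.re := by
    linear_combination z.re * hre + z.im * him
  have hzpos : 0 < z.re ^ 2 + z.im ^ 2 := by positivity
  rcases hE.lt_or_eq with hE | rfl
  · nlinarith
  · have hre0 : lam.re = 0 := (mul_eq_zero.mp (by linarith)).resolve_right hzpos.ne'
    have him0 : lam.im = 0 := by
      rw [hre0] at him
      nlinarith
    exact absurd (Complex.ext hre0 him0) hlam

/-- L² energy estimate for the coupled Sturm–Liouville system
`ŵ'' = λ(1-iα)ŵ + R(2ŵ + ŷ)`, `ŷ'' = λ(1+iα)ŷ + R(ŵ + 2ŷ)` with `R ≥ 0`: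
any nontrivial square-integrable solution (with square-integrable derivatives,
`√R ŵ, √R ŷ ∈ L²` and vanishing boundary fluxes) forces `Re λ < 0`. -/
theorem stmt_9 (α : ℝ) (lam : ℂ) (hlam : lam ≠ 0)
    (R : ℝ → ℝ) (hRcont : Continuous R) (hRpos : ∀ ξ, 0 ≤ R ξ)
    (w y : ℝ → ℂ) (hw : ContDiff ℝ 2 w) (hy : ContDiff ℝ 2 y)
    (hnontriv : ∃ ξ, w ξ ≠ 0 ∨ y ξ ≠ 0)
    (heqw : ∀ ξ, deriv (deriv w) ξ
      = lam * (1 - Complex.I * α) * w ξ + (R ξ : ℂ) * (2 * w ξ + y ξ))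
    (heqy : ∀ ξ, deriv (deriv y) ξ
      = lam * (1 + Complex.I * α) * y ξ + (R ξ : ℂ) * (w ξ + 2 * y ξ))
    (hw2 : Integrable (fun ξ => ‖w ξ‖ ^ 2))
    (hy2 : Integrable (fun ξ => ‖y ξ‖ ^ 2))
    (hw'2 : Integrable (fun ξ => ‖deriv w ξ‖ ^ 2))
    (hy'2 : Integrable (fun ξ => ‖deriv y ξ‖ ^ 2))
    (hRw2 : Integrable (fun ξ => R ξ * ‖w ξ‖ ^ 2))
    (hRy2 : Integrable (fun ξ => R ξ * ‖y ξ‖ ^ 2))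
    (hwTop : Tendsto (fun ξ => w ξ * (starRingEnd ℂ) (deriv w ξ)) atTop (nhds 0))
    (hwBot : Tendsto (fun ξ => w ξ * (starRingEnd ℂ) (deriv w ξ)) atBot (nhds 0))
    (hyTop : Tendsto (fun ξ => y ξ * (starRingEnd ℂ) (deriv y ξ)) atTop (nhds 0))
    (hyBot : Tendsto (fun ξ => y ξ * (starRingEnd ℂ) (deriv y ξ)) atBot (nhds 0)) :
    lam.re < 0 := by
  obtain ⟨ξ₀, hξ₀⟩ := hnontriv
  have hcw := integrable_conj_mul_coupling hRpos hRcont.aestronglyMeasurable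
    hw.continuous.aestronglyMeasurable hy.continuous.aestronglyMeasurable hRw2 hRy2
  have hcy := integrable_conj_mul_coupling hRpos hRcont.aestronglyMeasurable
    hy.continuous.aestronglyMeasurable hw.continuous.aestronglyMeasurable hRy2 hRw2
  have hEw := integral_conj_mul_deriv_deriv_of_eq heqw hw hw2 hcw hw'2 hwTop hwBot
  have hEy := integral_conj_mul_deriv_deriv_of_eq (c := lam * (1 + I * α))
    (fun ξ => (heqy ξ).trans (by ring)) hy hy2 hcy hy'2 hyTop hyBot
  have hcoupling := integral_add hcw hcy
  simp_rw [conj_mul_coupling_add_conj_mul_coupling, integral_complex_ofReal] at hcoupling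
  have hN : 0 < (∫ ξ, ‖w ξ‖ ^ 2) + ∫ ξ, ‖y ξ‖ ^ 2 := by
    rw [← integral_add hw2 hy2]
    refine integral_pos_of_integrable_nonneg_nonzero (x := ξ₀) (by fun_prop) (hw2.add hy2)
      (fun _ => by positivity) ?_
    rcases hξ₀ with h | h <;> positivity
  have hE : 0 ≤ (∫ ξ, ‖deriv w ξ‖ ^ 2) + (∫ ξ, ‖deriv y ξ‖ ^ 2)
      + ∫ ξ, R ξ * (‖w ξ‖ ^ 2 + ‖y ξ‖ ^ 2 + ‖w ξ + y ξ‖ ^ 2) :=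
    add_nonneg (add_nonneg (integral_nonneg fun _ => by positivity)
      (integral_nonneg fun _ => by positivity))
      (integral_nonneg fun ξ => mul_nonneg (hRpos ξ) (by positivity))
  refine re_neg_of_mul_eq_neg_ofReal hlam (z := (1 - I * α) * (∫ ξ, ‖w ξ‖ ^ 2 : ℝ)
    + (1 + I * α) * (∫ ξ, ‖y ξ‖ ^ 2 : ℝ)) (by simpa using hN) hE ?_
  push_cast
  linear_combination hEw + hEy + hcoupling
end

section
/- Let n ∈ ℕ, I ⊆ ℝ an interval, and D, T₀ ∈ Mₙ(ℂ) constant matrices with D·T₀ = T₀·D. Set 𝒜 := T₀². Suppose T₁, T₂ : I → Mₙ(ℂ) are differentiable solutions of the matrix Riccati equation T' = -T² + D·T - T·D + 𝒜, such that T₁(ζ) - T₀ and T₂(ζ) - T₀ are invertible for every ζ ∈ I. Then W := (T₁ - T₀)⁻¹ - (T₂ - T₀)⁻¹ is differentiable and satisfies the linear Sylvester equation W' = (D + T₀)·W - W·(D - T₀) on I. Moreover W = (T₁ - T₀)⁻¹·(T₂ - T₁)·(T₂ - T₀)⁻¹. -/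
/-!
With `A := T - T₀`, the commutation `D T₀ = T₀ D` turns the Riccati equation into
`A' = -A² + (D - T₀) A - A (D + T₀)`, and then `V := A⁻¹` satisfies
`V' = -V A' V = 1 + (D + T₀) V - V (D - T₀)`. This equation is affine in `V`, so the difference of
two such `V` solves the homogeneous Sylvester equation.
-/

open scoped Ring

theorem Matrix.hasDerivAt_iff {𝕜 α m n : Type*} [NontriviallyNormedField 𝕜]
    [NormedAddCommGroup α] [NormedSpace 𝕜 α] [Fintype m] [Fintype n]
    {M : 𝕜 → Matrix m n α} {M' : Matrix m n α} {x : 𝕜} :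
    HasDerivAt M M' x ↔ ∀ i j, HasDerivAt (fun s => M s i j) (M' i j) x :=
  hasDerivAt_pi.trans (forall_congr' fun _ => hasDerivAt_pi)

theorem HasDerivAt.ringInverse {𝕜 R : Type*} [NontriviallyNormedField 𝕜] [NormedRing R]
    [HasSummableGeomSeries R] [NormedAlgebra 𝕜 R] {f : 𝕜 → R} {f' : R} {x : 𝕜}
    (hf : HasDerivAt f f' x) (hx : IsUnit (f x)) :
    HasDerivAt (fun s => (f s)⁻¹ʳ) (-((f x)⁻¹ʳ * f' * (f x)⁻¹ʳ)) x := by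
  obtain ⟨u, hu⟩ := hx
  have hinv : HasFDerivAt Ring.inverse (-ContinuousLinearMap.mulLeftRight 𝕜 R ↑u⁻¹ ↑u⁻¹) (f x) :=
    hu ▸ hasFDerivAt_ringInverse u
  rw [← hu, Ring.inverse_unit]
  exact hinv.comp_hasDerivAt x hf

section Riccati

variable {R : Type*} [Ring R]

theorem riccati_eq_of_commute {D T₀ : R} (h : Commute D T₀) (X : R) :
    -(X * X) + D * X - X * D + T₀ * T₀
      = -((X - T₀) * (X - T₀)) + (D - T₀) * (X - T₀) - (X - T₀) * (D + T₀) := by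
  noncomm_ring
  rw [h.eq]
  abel

theorem Ring.inverse_mul_riccati_mul_inverse {A : R} (hA : IsUnit A) (P Q : R) :
    -(A⁻¹ʳ * (-(A * A) + P * A - A * Q) * A⁻¹ʳ) = 1 + Q * A⁻¹ʳ - A⁻¹ʳ * P := by
  have hright : A * A⁻¹ʳ = 1 := Ring.mul_inverse_cancel A hA
  have hleft : A⁻¹ʳ * A = 1 := Ring.inverse_mul_cancel A hA
  calc -(A⁻¹ʳ * (-(A * A) + P * A - A * Q) * A⁻¹ʳ)
      = (A⁻¹ʳ * A) * (A * A⁻¹ʳ) - A⁻¹ʳ * P * (A * A⁻¹ʳ) + (A⁻¹ʳ * A) * Q * A⁻¹ʳ := by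
        noncomm_ring
    _ = 1 + Q * A⁻¹ʳ - A⁻¹ʳ * P := by
        rw [hright, hleft]
        noncomm_ring

end Riccati

theorem HasDerivAt.inverse_sub_of_riccati {𝕜 R : Type*} [NontriviallyNormedField 𝕜] [NormedRing R]
    [HasSummableGeomSeries R] [NormedAlgebra 𝕜 R] {D T₀ : R} (hcomm : Commute D T₀)
    {T : 𝕜 → R} {x : 𝕜} (hT : HasDerivAt T (-(T x * T x) + D * T x - T x * D + T₀ * T₀) x)
    (hunit : IsUnit (T x - T₀)) :
    HasDerivAt (fun s => (T s - T₀)⁻¹ʳ)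
      (1 + (D + T₀) * (T x - T₀)⁻¹ʳ - (T x - T₀)⁻¹ʳ * (D - T₀)) x := by
  rw [riccati_eq_of_commute hcomm] at hT
  simpa only [Ring.inverse_mul_riccati_mul_inverse hunit] using (hT.sub_const T₀).ringInverse hunit

-- Any submultiplicative norm would do: `HasDerivAt` only sees the topology.
attribute [local instance] Matrix.linftyOpNormedRing Matrix.linftyOpNormedAlgebra

theorem stmt_12_general (n : ℕ) (I : Set ℝ)
    (D T0 : Matrix (Fin n) (Fin n) ℂ) (hcomm : D * T0 = T0 * D)
    (T1 T2 : ℝ → Matrix (Fin n) (Fin n) ℂ)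
    (hT1 : ∀ ζ ∈ I, ∀ i j, HasDerivAt (fun s => T1 s i j)
      ((-(T1 ζ * T1 ζ) + D * T1 ζ - T1 ζ * D + T0 * T0) i j) ζ)
    (hT2 : ∀ ζ ∈ I, ∀ i j, HasDerivAt (fun s => T2 s i j)
      ((-(T2 ζ * T2 ζ) + D * T2 ζ - T2 ζ * D + T0 * T0) i j) ζ)
    (hinv1 : ∀ ζ ∈ I, IsUnit (T1 ζ - T0))
    (hinv2 : ∀ ζ ∈ I, IsUnit (T2 ζ - T0)) :
    (∀ ζ ∈ I, ∀ i j, HasDerivAt (fun s => ((T1 s - T0)⁻¹ - (T2 s - T0)⁻¹) i j)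
      (((D + T0) * ((T1 ζ - T0)⁻¹ - (T2 ζ - T0)⁻¹)
        - ((T1 ζ - T0)⁻¹ - (T2 ζ - T0)⁻¹) * (D - T0)) i j) ζ) ∧
    (∀ ζ ∈ I, (T1 ζ - T0)⁻¹ - (T2 ζ - T0)⁻¹
      = (T1 ζ - T0)⁻¹ * (T2 ζ - T1 ζ) * (T2 ζ - T0)⁻¹) := by
  refine ⟨fun ζ hζ => Matrix.hasDerivAt_iff.1 ?_, fun ζ hζ => ?_⟩
  · have hV1 := (Matrix.hasDerivAt_iff.2 (hT1 ζ hζ)).inverse_sub_of_riccati hcomm (hinv1 ζ hζ)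
    have hV2 := (Matrix.hasDerivAt_iff.2 (hT2 ζ hζ)).inverse_sub_of_riccati hcomm (hinv2 ζ hζ)
    simp only [← Matrix.nonsing_inv_eq_ringInverse] at hV1 hV2
    exact (hV1.sub hV2).congr_deriv (by noncomm_ring)
  · rw [Matrix.inv_sub_inv (iff_of_true (hinv1 ζ hζ) (hinv2 ζ hζ)), sub_sub_sub_cancel_right]

/-- Superposition principle for the matrix Riccati equation `T' = -T² + DT - TD + T₀²`
(with `D` and `T₀` commuting constant matrices, so `±T₀` are fixed points): for two
solutions `T₁, T₂` with `Tᵢ - T₀` invertible, `W = (T₁-T₀)⁻¹ - (T₂-T₀)⁻¹` solves the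
linear Sylvester equation `W' = (D+T₀)W - W(D-T₀)` and equals
`(T₁-T₀)⁻¹(T₂-T₁)(T₂-T₀)⁻¹`. -/
theorem stmt_12 (n : ℕ) (I : Set ℝ) (hI : I.OrdConnected)
    (D T0 : Matrix (Fin n) (Fin n) ℂ) (hcomm : D * T0 = T0 * D)
    (T1 T2 : ℝ → Matrix (Fin n) (Fin n) ℂ)
    (hT1 : ∀ ζ ∈ I, ∀ i j, HasDerivAt (fun s => T1 s i j)
      ((-(T1 ζ * T1 ζ) + D * T1 ζ - T1 ζ * D + T0 * T0) i j) ζ)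
    (hT2 : ∀ ζ ∈ I, ∀ i j, HasDerivAt (fun s => T2 s i j)
      ((-(T2 ζ * T2 ζ) + D * T2 ζ - T2 ζ * D + T0 * T0) i j) ζ)
    (hinv1 : ∀ ζ ∈ I, IsUnit (T1 ζ - T0))
    (hinv2 : ∀ ζ ∈ I, IsUnit (T2 ζ - T0)) :
    (∀ ζ ∈ I, ∀ i j, HasDerivAt (fun s => ((T1 s - T0)⁻¹ - (T2 s - T0)⁻¹) i j)
      (((D + T0) * ((T1 ζ - T0)⁻¹ - (T2 ζ - T0)⁻¹)
        - ((T1 ζ - T0)⁻¹ - (T2 ζ - T0)⁻¹) * (D - T0)) i j) ζ) ∧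
    (∀ ζ ∈ I, (T1 ζ - T0)⁻¹ - (T2 ζ - T0)⁻¹
      = (T1 ζ - T0)⁻¹ * (T2 ζ - T1 ζ) * (T2 ζ - T0)⁻¹) :=
  stmt_12_general n I D T0 hcomm T1 T2 hT1 hT2 hinv1 hinv2
end

section
/- Let α, ρ, l ∈ ℝ with α² < 1/2. If (-l² + 2il - 1 - iρ(1-iα))·(-l² + 2il - 1 - iρ(1+iα)) = 1, then l = 0 and ρ = 0. -/
/-!
With `w = -l² - 1 + i(2l - ρ)` the relation reads `w² - α²ρ² = 1`. Since `Re w ≤ -1`, the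
imaginary part `2 Re w Im w` vanishes only for `ρ = 2l`; the real part then becomes
`l²(l² + 2 - 4α²) = 0`, and `α² < 1/2` makes the second factor positive.
-/

open Complex

theorem dispersion_product_eq (α ρ l : ℝ) :
    (-(l : ℂ) ^ 2 + 2 * I * l - 1 - I * ρ * (1 - I * α))
        * (-(l : ℂ) ^ 2 + 2 * I * l - 1 - I * ρ * (1 + I * α))
      = (((-l ^ 2 - 1 : ℝ) : ℂ) + ((2 * l - ρ : ℝ) : ℂ) * I) ^ 2 - ((α * ρ : ℝ) : ℂ) ^ 2 := by
  push_cast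
  linear_combination (ρ ^ 2 * α ^ 2 * (1 - I ^ 2) : ℂ) * I_sq

theorem im_eq_zero_of_sq_sub_sq_eq_one {a b c : ℝ} (ha : a ≠ 0)
    (h : ((a : ℂ) + b * I) ^ 2 - (c : ℂ) ^ 2 = 1) : b = 0 ∧ a ^ 2 - c ^ 2 = 1 := by
  have hre := congrArg re h
  have him := congrArg im h
  simp only [sq, sub_re, sub_im, mul_re, mul_im, add_re, add_im, ofReal_re, ofReal_im,
    I_re, I_im, one_re, one_im] at hre him
  have hb : b = 0 := (mul_eq_zero.1 (by linarith : a * b = 0)).resolve_left ha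
  subst hb
  exact ⟨rfl, by linarith⟩

theorem eq_zero_of_dispersion_real {α l : ℝ} (hα : α ^ 2 < 1 / 2)
    (h : (-l ^ 2 - 1) ^ 2 - (α * (2 * l)) ^ 2 = 1) : l = 0 := by
  have hfactor : l ^ 2 * (l ^ 2 + 2 - 4 * α ^ 2) = 0 := by linear_combination h
  have hpos : 0 < l ^ 2 + 2 - 4 * α ^ 2 := by nlinarith [sq_nonneg l]
  exact pow_eq_zero_iff two_ne_zero |>.1 ((mul_eq_zero.1 hfactor).resolve_right hpos.ne')

/-- Spectral stability of the wave train for `α² < 1/2`: if the dispersion relation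
`(-l² + 2il - 1 - iρ(1-iα))(-l² + 2il - 1 - iρ(1+iα)) = 1` holds with `l, ρ` real,
then `l = 0` and `ρ = 0`, i.e. the essential spectrum touches the imaginary axis
only at the origin. -/
theorem stmt_17 (α ρ l : ℝ) (hα : α ^ 2 < 1 / 2)
    (h : (-(l : ℂ) ^ 2 + 2 * Complex.I * l - 1 - Complex.I * ρ * (1 - Complex.I * α))
        * (-(l : ℂ) ^ 2 + 2 * Complex.I * l - 1 - Complex.I * ρ * (1 + Complex.I * α))
        = 1) :
    l = 0 ∧ ρ = 0 := by
  rw [dispersion_product_eq] at h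
  have hre_ne : -l ^ 2 - 1 ≠ 0 := by nlinarith [sq_nonneg l]
  obtain ⟨him, hreal⟩ := im_eq_zero_of_sq_sub_sq_eq_one hre_ne h
  obtain rfl : ρ = 2 * l := by linarith
  have hl := eq_zero_of_dispersion_real hα hreal
  exact ⟨hl, by simp [hl]⟩
end
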